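/- Let 0 < ε < 1 and let h₁, h₂ : B₁(0') → ℝ be C² functions with h₁(0') = h₂(0') = 0, ∇h₁(0') = ∇h₂(0') = 0, C² norms at most γ, and -ε/2 + h₂ < ε/2 + h₁ on B₁(0'). Fix z = (z', z_n) ∈ Ω₁ with |z'| ≤ 1/2 and set R = ε + h₁(z') - h₂(z'). Define ĥ₁(y') = (ε - h₂(z') + h₁(z' + Ry'))/R and ĥ₂(y') = (-h₂(z') + h₂(z' + Ry'))/R for |y'| ≤ 1. Then ĥ₁(0') = 1, ĥ₂(0') = 0, ĥ₂ < ĥ₁ on its domain, and for each l ≥ 1 there is a constant C_l depending only on l and γ (not on ε or z) with |∇^l ĥ₁(y')|, |∇^l ĥ₂(y')| ≤ C_l for |y'| ≤ 1, provided h₁, h₂ ∈ C^{l}. -/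

import Mathlib

/-!
Rescaling by `R` multiplies the `i`-th derivative by `R ^ i`, and the division by `R` takes one
factor back, so `‖D^i ĥ(y')‖ = R^(i-1) ‖D^i h(z' + R y')‖`. Since `h(0') = 0` and `‖Dh‖ ≤ γ` on
the unit ball, the mean value inequality gives `|h(z')| ≤ γ/2`, hence `R ≤ ε + γ < 1 + γ`, and
every derivative of order `1 ≤ i ≤ l` of the rescaled graphs is at most `(1 + γ)^l γ`.
-/

open Metric

section Rescaling

variable {𝕜 E F : Type*} [NontriviallyNormedField 𝕜] [NormedAddCommGroup E] [NormedSpace 𝕜 E]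
  [NormedAddCommGroup F] [NormedSpace 𝕜 F]

theorem iteratedFDeriv_const_add_apply (a : F) (f : E → F) {i : ℕ} (hi : i ≠ 0) (x : E) :
    iteratedFDeriv 𝕜 i (fun y => a + f y) x = iteratedFDeriv 𝕜 i f x := by
  obtain ⟨i, rfl⟩ := Nat.exists_eq_succ_of_ne_zero hi
  simp only [iteratedFDeriv_succ_eq_comp_right, fderiv_const_add]

theorem iteratedFDeriv_comp_smul {n : WithTop ℕ∞} {f : E → F} (hf : ContDiff 𝕜 n f) (c : 𝕜)
    (x : E) {i : ℕ} (hi : i ≤ n) :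
    iteratedFDeriv 𝕜 i (fun y => f (c • y)) x = c ^ i • iteratedFDeriv 𝕜 i f (c • x) := by
  have hcomp : (fun y => f (c • y)) = f ∘ (c • ContinuousLinearMap.id 𝕜 E) := rfl
  rw [hcomp, (c • ContinuousLinearMap.id 𝕜 E).iteratedFDeriv_comp_right hf x hi]
  ext v
  simp [ContinuousMultilinearMap.map_smul_univ]

theorem iteratedFDeriv_rescale {n : WithTop ℕ∞} {f : E → 𝕜} (hf : ContDiff 𝕜 n f) (a : 𝕜)
    (z : E) {c : 𝕜} (hc : c ≠ 0) {i : ℕ} (hi : 1 ≤ i) (hin : i ≤ n) (y : E) :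
    iteratedFDeriv 𝕜 i (fun y => (a + f (z + c • y)) / c) y =
      c ^ (i - 1) • iteratedFDeriv 𝕜 i f (z + c • y) := by
  set g : E → 𝕜 := fun x => a + f (z + x)
  have hg : ContDiff 𝕜 n g := contDiff_const.add (hf.comp (contDiff_const.add contDiff_id))
  have hgc : ContDiffAt 𝕜 i (fun y => g (c • y)) y :=
    ((hg.comp (contDiff_const_smul c)).of_le hin).contDiffAt
  have hdiv : (fun y => (a + f (z + c • y)) / c) = fun y => c⁻¹ • g (c • y) := by
    funext y
    simp [g, div_eq_inv_mul]
  rw [hdiv, iteratedFDeriv_const_smul_apply' hgc, iteratedFDeriv_comp_smul hg c y hin,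
    iteratedFDeriv_const_add_apply a _ (by omega), iteratedFDeriv_comp_add_left, smul_smul]
  congr 1
  rw [← pow_sub_one_mul (by omega) c, mul_comm (c ^ (i - 1)), inv_mul_cancel_left₀ hc]

end Rescaling

theorem norm_le_mul_norm_of_norm_iteratedFDeriv_one_le {E F : Type*} [NormedAddCommGroup E]
    [NormedSpace ℝ E] [NormedAddCommGroup F] [NormedSpace ℝ F] {f : E → F} {C : ℝ}
    (hf : ContDiff ℝ 1 f) (hf0 : f 0 = 0)
    (hbound : ∀ x : E, ‖x‖ ≤ 1 → ‖iteratedFDeriv ℝ 1 f x‖ ≤ C) {z : E} (hz : ‖z‖ ≤ 1) :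
    ‖f z‖ ≤ C * ‖z‖ := by
  have := (convex_closedBall (0 : E) 1).norm_image_sub_le_of_norm_fderiv_le
    (fun x _ => (hf.differentiable one_ne_zero).differentiableAt)
    (fun x hx => by simpa using hbound x (by simpa using hx))
    (mem_closedBall_self zero_le_one) (by simpa using hz)
  simpa [hf0] using this

theorem stmt_15_general (m l : ℕ) (γ : ℝ) (hγ : 0 < γ) :
    ∃ Cl : ℝ, 0 < Cl ∧
      ∀ ε : ℝ, 0 < ε → ε < 1 →
      ∀ h₁ h₂ : EuclideanSpace ℝ (Fin m) → ℝ,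
        ContDiff ℝ l h₁ → ContDiff ℝ l h₂ →
        h₁ 0 = 0 → h₂ 0 = 0 → fderiv ℝ h₁ 0 = 0 → fderiv ℝ h₂ 0 = 0 →
        (∀ x' : EuclideanSpace ℝ (Fin m), ‖x'‖ ≤ 1 →
          ∀ i ≤ l, ‖iteratedFDeriv ℝ i h₁ x'‖ ≤ γ ∧ ‖iteratedFDeriv ℝ i h₂ x'‖ ≤ γ) →
        (∀ x' : EuclideanSpace ℝ (Fin m), ‖x'‖ ≤ 1 →
          -ε / 2 + h₂ x' < ε / 2 + h₁ x') →
      ∀ z' : EuclideanSpace ℝ (Fin m), ‖z'‖ ≤ 1 / 2 →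
      ∀ R : ℝ, R = ε + h₁ z' - h₂ z' →
      (∀ y' : EuclideanSpace ℝ (Fin m), ‖y'‖ ≤ 1 → ‖z' + R • y'‖ ≤ 1) →
      ∀ hh₁ hh₂ : EuclideanSpace ℝ (Fin m) → ℝ,
        hh₁ = (fun y' => (ε - h₂ z' + h₁ (z' + R • y')) / R) →
        hh₂ = (fun y' => (-h₂ z' + h₂ (z' + R • y')) / R) →
        hh₁ 0 = 1 ∧ hh₂ 0 = 0 ∧
          (∀ y' : EuclideanSpace ℝ (Fin m), ‖y'‖ ≤ 1 → hh₂ y' < hh₁ y') ∧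
          (∀ y' : EuclideanSpace ℝ (Fin m), ‖y'‖ ≤ 1 → ∀ i, 1 ≤ i → i ≤ l →
            ‖iteratedFDeriv ℝ i hh₁ y'‖ ≤ Cl ∧ ‖iteratedFDeriv ℝ i hh₂ y'‖ ≤ Cl) := by
  refine ⟨(1 + γ) ^ l * γ, by positivity, ?_⟩
  intro ε hε0 hε1 h₁ h₂ hC₁ hC₂ h₁0 h₂0 _ _ hbound hgap z' hz' R hR hin hh₁ hh₂ rfl rfl
  have hz'1 : ‖z'‖ ≤ 1 := hz'.trans (by norm_num)
  have hRpos : 0 < R := by linarith [hgap z' hz'1]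
  refine ⟨?_, by simp, fun y' hy' => ?_, fun y' hy' i hi hil => ?_⟩
  · have : ε - h₂ z' + h₁ z' = R := by rw [hR]; ring
    simp [this, hRpos.ne']
  · rw [div_lt_div_iff_of_pos_right hRpos]
    linarith [hgap _ (hin y' hy')]
  have hl : 1 ≤ l := hi.trans hil
  have hRle : R ≤ 1 + γ := by
    have hC : (1 : WithTop ℕ∞) ≤ l := by exact_mod_cast hl
    have h₁z := norm_le_mul_norm_of_norm_iteratedFDeriv_one_le (hC₁.of_le hC) h₁0
      (fun x hx => (hbound x hx 1 hl).1) hz'1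
    have h₂z := norm_le_mul_norm_of_norm_iteratedFDeriv_one_le (hC₂.of_le hC) h₂0
      (fun x hx => (hbound x hx 1 hl).2) hz'1
    rw [Real.norm_eq_abs, abs_le] at h₁z h₂z
    linarith [mul_le_mul_of_nonneg_left hz' hγ.le]
  have hRpow : R ^ (i - 1) ≤ (1 + γ) ^ l :=
    (pow_le_pow_left₀ hRpos.le hRle _).trans
      (pow_le_pow_right₀ (by linarith) (by omega))
  have hrescaled : ∀ (h : EuclideanSpace ℝ (Fin m) → ℝ) (a : ℝ), ContDiff ℝ l h →
      ‖iteratedFDeriv ℝ i h (z' + R • y')‖ ≤ γ →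
      ‖iteratedFDeriv ℝ i (fun y => (a + h (z' + R • y)) / R) y'‖ ≤ (1 + γ) ^ l * γ :=
    fun h a hC hDh => by
      rw [iteratedFDeriv_rescale hC a z' hRpos.ne' hi (by exact_mod_cast hil), norm_smul,
        Real.norm_of_nonneg (pow_nonneg hRpos.le _)]
      exact mul_le_mul hRpow hDh (norm_nonneg _) (by positivity)
  have hx := hin y' hy'
  exact ⟨hrescaled h₁ _ hC₁ (hbound _ hx i hil).1, hrescaled h₂ _ hC₂ (hbound _ hx i hil).2⟩

/-- rescaling lemma: with `R = ε + h₁(z') - h₂(z')` and the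
rescaled graphs `hh₁(y') = (ε - h₂(z') + h₁(z'+Ry'))/R`,
`hh₂(y') = (-h₂(z') + h₂(z'+Ry'))/R`, one has `hh₁(0') = 1`, `hh₂(0') = 0`,
`hh₂ < hh₁`, and all derivatives of order `1 ≤ i ≤ l` are bounded on the unit
ball by a constant depending only on `l` and `γ` (not on `ε` or `z`). -/
theorem stmt_15 (m l : ℕ) (hm : 1 ≤ m) (hl : 1 ≤ l) (γ : ℝ) (hγ : 0 < γ) :
    ∃ Cl : ℝ, 0 < Cl ∧
      ∀ ε : ℝ, 0 < ε → ε < 1 →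
      ∀ h₁ h₂ : EuclideanSpace ℝ (Fin m) → ℝ,
        ContDiff ℝ l h₁ → ContDiff ℝ l h₂ →
        h₁ 0 = 0 → h₂ 0 = 0 → fderiv ℝ h₁ 0 = 0 → fderiv ℝ h₂ 0 = 0 →
        (∀ x' : EuclideanSpace ℝ (Fin m), ‖x'‖ ≤ 1 →
          ∀ i ≤ l, ‖iteratedFDeriv ℝ i h₁ x'‖ ≤ γ ∧ ‖iteratedFDeriv ℝ i h₂ x'‖ ≤ γ) →
        (∀ x' : EuclideanSpace ℝ (Fin m), ‖x'‖ ≤ 1 →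
          -ε / 2 + h₂ x' < ε / 2 + h₁ x') →
      ∀ z' : EuclideanSpace ℝ (Fin m), ‖z'‖ ≤ 1 / 2 →
      ∀ R : ℝ, R = ε + h₁ z' - h₂ z' →
      (∀ y' : EuclideanSpace ℝ (Fin m), ‖y'‖ ≤ 1 → ‖z' + R • y'‖ ≤ 1) →
      ∀ hh₁ hh₂ : EuclideanSpace ℝ (Fin m) → ℝ,
        hh₁ = (fun y' => (ε - h₂ z' + h₁ (z' + R • y')) / R) →
        hh₂ = (fun y' => (-h₂ z' + h₂ (z' + R • y')) / R) →
        hh₁ 0 = 1 ∧ hh₂ 0 = 0 ∧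
          (∀ y' : EuclideanSpace ℝ (Fin m), ‖y'‖ ≤ 1 → hh₂ y' < hh₁ y') ∧
          (∀ y' : EuclideanSpace ℝ (Fin m), ‖y'‖ ≤ 1 → ∀ i, 1 ≤ i → i ≤ l →
            ‖iteratedFDeriv ℝ i hh₁ y'‖ ≤ Cl ∧ ‖iteratedFDeriv ℝ i hh₂ y'‖ ≤ Cl) :=
  stmt_15_general m l γ hγ
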